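/- arXiv:2404.02812 — 3 statements merged into one kernel-verified Lean document; each statement's English description precedes it below -/
import Mathlib

section
/- Let δ > 0, C' > 0 and E > 0 be real numbers. Let φ : ℝ → ℝ be a function with nonnegative values that is non-increasing on [0,∞), satisfies φ(s) ≤ E/s for every real s > 0, and satisfies the functional inequality r·φ(s+r) ≤ C'·φ(s)^{1+δ} for all real s ≥ 0 and all real r ≥ 0. Then φ(s) = 0 for every real s ≥ E·(2·C')^{1/δ} + 1/(1 − 2^{−δ}). -/
/-!
Put `s₀ = E (2C')^{1/δ}` and `M = (2C')^{-1/δ}`, so that `φ s₀ ≤ E / s₀ = M` and `C' M^δ = 1/2`.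
Feeding `φ t ≤ M ε` into the functional inequality with the step `r = ε^δ` gives
`φ (t + ε^δ) ≤ M ε / 2`. Iterating from `s₀` with `ε = 2^{-n}`, the steps `2^{-δ n}` sum to at most
`1 / (1 - 2^{-δ})`, so `φ s ≤ M 2^{-n}` for every `n` by monotonicity, i.e. `φ s = 0`.
-/

open Real Finset

namespace DeGiorgi

variable {φ : ℝ → ℝ} {δ C' : ℝ}

theorem apply_add_rpow_le_half (hδ : 0 < δ) (hC' : 0 ≤ C') (hφ : ∀ s, 0 ≤ φ s)
    (hfunc : ∀ s : ℝ, 0 ≤ s → ∀ r : ℝ, 0 ≤ r → r * φ (s + r) ≤ C' * φ s ^ (1 + δ))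
    {M ε t : ℝ} (hM : 0 ≤ M) (hMC : C' * M ^ δ ≤ 1 / 2) (hε : 0 < ε) (ht : 0 ≤ t)
    (hφt : φ t ≤ M * ε) : φ (t + ε ^ δ) ≤ M * ε / 2 := by
  have hεδ : 0 < ε ^ δ := rpow_pos_of_pos hε δ
  refine le_of_mul_le_mul_left ?_ hεδ
  calc ε ^ δ * φ (t + ε ^ δ) ≤ C' * φ t ^ (1 + δ) := hfunc t ht _ hεδ.le
    _ ≤ C' * (M * ε) ^ (1 + δ) := by gcongr; exact hφ t
    _ = C' * M ^ δ * ε ^ δ * (M * ε) := by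
      rw [rpow_one_add' (by positivity) (by linarith), mul_rpow hM hε.le]
      ring
    _ ≤ 1 / 2 * ε ^ δ * (M * ε) := by gcongr
    _ = ε ^ δ * (M * ε / 2) := by ring

theorem apply_add_geom_sum_le (hδ : 0 < δ) (hC' : 0 ≤ C') (hφ : ∀ s, 0 ≤ φ s)
    (hfunc : ∀ s : ℝ, 0 ≤ s → ∀ r : ℝ, 0 ≤ r → r * φ (s + r) ≤ C' * φ s ^ (1 + δ))
    {M t : ℝ} (hM : 0 ≤ M) (hMC : C' * M ^ δ ≤ 1 / 2) (ht : 0 ≤ t) (hφt : φ t ≤ M) (n : ℕ) :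
    φ (t + ∑ k ∈ range n, ((2 : ℝ) ^ (-δ)) ^ k) ≤ M * (1 / 2) ^ n := by
  induction n with
  | zero => simpa using hφt
  | succ n ih =>
    have hstep : ((2 : ℝ) ^ (-δ)) ^ n = ((1 / 2 : ℝ) ^ n) ^ δ := by
      rw [rpow_neg zero_le_two, ← inv_rpow zero_le_two, rpow_pow_comm (by norm_num), one_div]
    rw [sum_range_succ, ← add_assoc, hstep, pow_succ, ← mul_assoc, mul_one_div]
    exact apply_add_rpow_le_half hδ hC' hφ hfunc hM hMC (by positivity) (by positivity) ih

theorem geom_sum_range_le_of_lt_one {q : ℝ} (hq₀ : 0 ≤ q) (hq₁ : q < 1) (n : ℕ) :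
    ∑ k ∈ range n, q ^ k ≤ 1 / (1 - q) := by
  have h := geom_sum_Ico_le_of_lt_one hq₀ hq₁ (m := 0) (n := n)
  rwa [pow_zero, ← range_eq_Ico] at h

theorem nonpos_of_forall_le_mul_half_pow {x M : ℝ} (h : ∀ n : ℕ, x ≤ M * (1 / 2) ^ n) :
    x ≤ 0 := by
  have hlim := (tendsto_pow_atTop_nhds_zero_of_lt_one (by norm_num : (0 : ℝ) ≤ 1 / 2)
    (by norm_num)).const_mul M
  rw [mul_zero] at hlim
  exact ge_of_tendsto' hlim h

end DeGiorgi

open DeGiorgi in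
/-- De Giorgi-type iteration lemma: if `φ : ℝ → [0,∞)` is non-increasing on `[0,∞)`,
decays like `E/s`, and satisfies the functional inequality
`r * φ (s + r) ≤ C' * φ s ^ (1 + δ)`, then `φ` vanishes for
`s ≥ E * (2 * C') ^ (1/δ) + 1 / (1 - 2 ^ (-δ))`. -/
theorem deGiorgi_iteration
    (δ C' E : ℝ) (hδ : 0 < δ) (hC' : 0 < C') (hE : 0 < E)
    (φ : ℝ → ℝ)
    (hφ_nonneg : ∀ s, 0 ≤ φ s)
    (hφ_mono : AntitoneOn φ (Set.Ici (0 : ℝ)))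
    (hφ_decay : ∀ s : ℝ, 0 < s → φ s ≤ E / s)
    (hfunc : ∀ s : ℝ, 0 ≤ s → ∀ r : ℝ, 0 ≤ r → r * φ (s + r) ≤ C' * φ s ^ (1 + δ)) :
    ∀ s : ℝ, E * (2 * C') ^ (1 / δ) + 1 / (1 - 2 ^ (-δ)) ≤ s → φ s = 0 := by
  intro s hs
  set b := (2 * C') ^ (1 / δ) with hb_def
  have hb : 0 < b := by positivity
  have hs₀ : 0 < E * b := by positivity
  have hφs₀ : φ (E * b) ≤ b⁻¹ := (hφ_decay _ hs₀).trans_eq (by field_simp)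
  have hbδ : b ^ δ = 2 * C' := by rw [hb_def, one_div, rpow_inv_rpow (by positivity) hδ.ne']
  have hMC : C' * b⁻¹ ^ δ = 1 / 2 := by
    rw [inv_rpow hb.le, hbδ]
    field_simp
  have hq₁ : (2 : ℝ) ^ (-δ) < 1 := rpow_lt_one_of_one_lt_of_neg one_lt_two (by linarith)
  refine le_antisymm (nonpos_of_forall_le_mul_half_pow (M := b⁻¹) fun n => ?_) (hφ_nonneg s)
  have hsum_le := geom_sum_range_le_of_lt_one (by positivity) hq₁ n
  have hsum_nonneg : 0 ≤ ∑ k ∈ range n, ((2 : ℝ) ^ (-δ)) ^ k := by positivity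
  have hφs : φ s ≤ φ (E * b + ∑ k ∈ range n, ((2 : ℝ) ^ (-δ)) ^ k) :=
    hφ_mono (Set.mem_Ici.2 (by positivity)) (Set.mem_Ici.2 (by linarith)) (by linarith)
  exact hφs.trans <|
    apply_add_geom_sum_le hδ hC'.le hφ_nonneg hfunc (by positivity) hMC.le hs₀.le hφs₀ n
end

section
/- Let δ > 0 and C' > 0 be real numbers and let φ : ℝ → ℝ be a function with nonnegative values satisfying the functional inequality r·φ(s+r) ≤ C'·φ(s)^{1+δ} for all real s ≥ 0 and all real r ≥ 0. Let s₀ ≥ 0 be a real number with φ(s₀)^δ ≤ 1/(2·C'). Then for every natural number m one has φ(s₀ + Σ_{i=0}^{m} 2^{−i·δ}) ≤ C'^{−1/δ} · 2^{−m−1−1/δ}. -/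
/-!
Put `ε_k = C'^(-1/δ) 2^(-k-1/δ)`, so that `ε_0 = (2C')^(-1/δ)` and `C' ε_k^δ = 2^(-kδ) / 2`.
If `φ s ≤ ε_k`, then the functional inequality with the radius `r = 2^(-kδ)` gives
`r φ(s + r) ≤ C' ε_k^(1+δ) = ε_k · C' ε_k^δ = r ε_k / 2`,
i.e. `φ(s + r) ≤ ε_k / 2 = ε_(k+1)`.
Starting from `φ s₀ ≤ ε_0` this halves the bound at each partial sum.
-/

namespace DeGiorgi

open Real

noncomputable def level (C' δ k : ℝ) : ℝ := C' ^ (-(1 / δ)) * 2 ^ (-k - 1 / δ)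

theorem level_nonneg {C' : ℝ} (hC' : 0 ≤ C') (δ k : ℝ) : 0 ≤ level C' δ k := by
  unfold level; positivity

theorem level_add_one (C' δ k : ℝ) : level C' δ (k + 1) = level C' δ k / 2 := by
  have h : (2 : ℝ) ^ (-(k + 1) - 1 / δ) = 2 ^ (-k - 1 / δ) / 2 := by
    rw [show -(k + 1) - 1 / δ = -k - 1 / δ - 1 by ring, rpow_sub two_pos, rpow_one]
  rw [level, level, h, mul_div_assoc]

theorem mul_level_rpow {C' δ : ℝ} (hC' : 0 < C') (hδ : δ ≠ 0) (k : ℝ) :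
    C' * level C' δ k ^ δ = 2 ^ (-k * δ) / 2 := by
  rw [level, mul_rpow (by positivity) (by positivity), ← rpow_mul hC'.le, ← rpow_mul two_pos.le,
    show -(1 / δ) * δ = -1 by field_simp, show (-k - 1 / δ) * δ = -k * δ - 1 by field_simp,
    rpow_sub two_pos, rpow_one, rpow_neg_one, ← mul_assoc, mul_inv_cancel₀ hC'.ne', one_mul]

theorem le_level_zero_of_rpow_le {C' δ x : ℝ} (hC' : 0 < C') (hδ : 0 < δ) (hx : 0 ≤ x)
    (h : x ^ δ ≤ 1 / (2 * C')) : x ≤ level C' δ 0 := by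
  have hlevel : level C' δ 0 ^ δ = 1 / (2 * C') := by
    have := mul_level_rpow hC' hδ.ne' 0
    rw [neg_zero, zero_mul, rpow_zero] at this
    field_simp
    linarith
  rwa [← rpow_le_rpow_iff hx (level_nonneg hC'.le δ 0) hδ, hlevel]

end DeGiorgi

theorem le_half_of_mul_le_mul_rpow {φ : ℝ → ℝ} {C' δ s r ε : ℝ} (hC' : 0 ≤ C')
    (hδ : 0 ≤ δ) (hφs : 0 ≤ φ s) (hfunc : r * φ (s + r) ≤ C' * φ s ^ (1 + δ))
    (hr : 0 < r) (hε : φ s ≤ ε) (hsmall : C' * ε ^ δ ≤ r / 2) : φ (s + r) ≤ ε / 2 := by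
  have hε₀ : 0 ≤ ε := hφs.trans hε
  have : r * φ (s + r) ≤ r * (ε / 2) :=
    calc r * φ (s + r) ≤ C' * φ s ^ (1 + δ) := hfunc
      _ ≤ C' * ε ^ (1 + δ) := by gcongr
      _ = ε * (C' * ε ^ δ) := by rw [Real.rpow_one_add' hε₀ (by positivity)]; ring
      _ ≤ ε * (r / 2) := by gcongr
      _ = r * (ε / 2) := by ring
  exact le_of_mul_le_mul_left this hr

/-- The inductive claim of the De Giorgi-type iteration: if `φ : ℝ → [0,∞)` satisfies
`r * φ (s + r) ≤ C' * φ s ^ (1 + δ)` and `φ s₀ ^ δ ≤ 1 / (2 * C')`, then for every `m`,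
`φ (s₀ + ∑_{i=0}^m 2 ^ (-i * δ)) ≤ C' ^ (-1/δ) * 2 ^ (-m - 1 - 1/δ)`. -/
theorem deGiorgi_claim
    (δ C' : ℝ) (hδ : 0 < δ) (hC' : 0 < C')
    (φ : ℝ → ℝ)
    (hφ_nonneg : ∀ s, 0 ≤ φ s)
    (hfunc : ∀ s : ℝ, 0 ≤ s → ∀ r : ℝ, 0 ≤ r → r * φ (s + r) ≤ C' * φ s ^ (1 + δ))
    (s₀ : ℝ) (hs₀ : 0 ≤ s₀)
    (hstart : φ s₀ ^ δ ≤ 1 / (2 * C')) :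
    ∀ m : ℕ,
      φ (s₀ + ∑ i ∈ Finset.range (m + 1), (2 : ℝ) ^ (-(i : ℝ) * δ)) ≤
        C' ^ (-(1 / δ)) * 2 ^ (-(m : ℝ) - 1 - 1 / δ) := by
  have hbound : ∀ k : ℕ,
      φ (s₀ + ∑ i ∈ Finset.range k, (2 : ℝ) ^ (-(i : ℝ) * δ)) ≤
        DeGiorgi.level C' δ k := by
    intro k
    induction k with
    | zero =>
      simpa using DeGiorgi.le_level_zero_of_rpow_le hC' hδ (hφ_nonneg s₀) hstart
    | succ k ih =>
      have hpoint : 0 ≤ s₀ + ∑ i ∈ Finset.range k, (2 : ℝ) ^ (-(i : ℝ) * δ) := by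
        positivity
      rw [Finset.sum_range_succ, ← add_assoc, Nat.cast_succ, DeGiorgi.level_add_one]
      exact le_half_of_mul_le_mul_rpow hC'.le hδ.le (hφ_nonneg _)
        (hfunc _ hpoint _ (by positivity)) (by positivity) ih
        (DeGiorgi.mul_level_rpow hC' hδ.ne' k).le
  intro m
  convert hbound (m + 1) using 1
  rw [DeGiorgi.level, Nat.cast_succ, neg_add, ← sub_eq_add_neg]
end

section
/- For every real number p > 0 there exists a constant C > 0, depending only on p, such that for every real number f ≥ 0 and every real number F one has f^p · e^F ≤ e^F · (1 + |F|)^p + C · e^{2f}. -/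
open Real

/-! When `f ≤ 1 + |F|` the entropy term alone dominates, by monotonicity of `t ↦ t ^ p`.
Otherwise `F < f`, so `f ^ p * e ^ F ≤ f ^ p * e ^ f`, and the polynomial factor is absorbed
by one more exponential: `f ^ p ≤ p ^ p * e ^ f`. -/

lemma rpow_le_rpow_mul_exp {p x : ℝ} (hp : 0 < p) (hx : 0 ≤ x) : x ^ p ≤ p ^ p * exp x := by
  have hlin : x ≤ p * exp (x / p) := by
    calc x = p * (x / p) := by field_simp
      _ ≤ p * exp (x / p) := by gcongr; linarith [add_one_le_exp (x / p)]
  calc x ^ p ≤ (p * exp (x / p)) ^ p := rpow_le_rpow hx hlin hp.le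
    _ = p ^ p * exp x := by
      rw [mul_rpow hp.le (exp_nonneg _), ← exp_mul, div_mul_cancel₀ x hp.ne']

lemma rpow_mul_exp_le_of_le {p f F : ℝ} (hp : 0 < p) (hf : 0 ≤ f) (hF : F ≤ f) :
    f ^ p * exp F ≤ p ^ p * exp (2 * f) :=
  calc f ^ p * exp F ≤ p ^ p * exp f * exp f := by
        gcongr
        exact rpow_le_rpow_mul_exp hp hf
    _ = p ^ p * exp (2 * f) := by rw [mul_assoc, ← exp_add, two_mul]

/-- The pointwise 'Fact' of Guo–Phong–Tong: for every `p > 0` there is `C > 0` depending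
only on `p` such that `f ^ p * e ^ F ≤ e ^ F * (1 + |F|) ^ p + C * e ^ (2 * f)` for all
`f ≥ 0` and all real `F`. -/
theorem pointwise_fact (p : ℝ) (hp : 0 < p) :
    ∃ C : ℝ, 0 < C ∧ ∀ f F : ℝ, 0 ≤ f →
      f ^ p * Real.exp F ≤ Real.exp F * (1 + |F|) ^ p + C * Real.exp (2 * f) := by
  refine ⟨p ^ p, by positivity, fun f F hf => ?_⟩
  have hentropy : 0 ≤ exp F * (1 + |F|) ^ p := by positivity
  have hexp : 0 ≤ p ^ p * exp (2 * f) := by positivity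
  rcases le_or_gt f (1 + |F|) with hsmall | hlarge
  · have : f ^ p * exp F ≤ exp F * (1 + |F|) ^ p := by
      rw [mul_comm]
      gcongr
    linarith
  · have hF : F ≤ f := (le_abs_self F).trans (by linarith)
    linarith [rpow_mul_exp_le_of_le hp hf hF]
end
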